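/- Let G be a module over Z_p (the integers localized at a prime p) with partial decomposition bases C and C'. Then for every equivalence class e of Ulm sequences, ŵ_C(e,G) = ŵ_{C'}(e,G); that is, the invariant ŵ(e,G) does not depend on the choice of partial decomposition basis. -/

import Mathlib

noncomputable section

namespace UlmW

universe u

variable {R : Type*} [CommRing R]

/-- The submodule `p^α M`, defined by transfinite recursion on `α`. -/
def ppow {M : Type u} [AddCommGroup M] [Module R M] (p : R) (α : Ordinal.{u}) :
    Submodule R M :=
  Ordinal.limitRecOn α ⊤ (fun _ S => Submodule.map (LinearMap.lsmul R M p) S)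
    fun β _ ih => ⨅ (γ : Set.Iio β), ih γ.1 γ.2

open scoped Classical in
/-- The `p`-height of `x`, with `⊤` playing the role of `∞`. -/
def pheight {M : Type u} [AddCommGroup M] [Module R M] (p : R) (x : M) :
    WithTop Ordinal.{u} :=
  if h : ∃ α : Ordinal.{u}, x ∈ ppow p α ∧ x ∉ ppow p (α + 1) then (h.choose : WithTop Ordinal)
  else ⊤

/-- `H⁰ = {x : ∃ a ≠ 0, a • x ∈ H}`. -/
def hull {M : Type u} [AddCommGroup M] [Module R M] (H : Submodule R M) : Set M :=
  {x | ∃ a : R, a ≠ 0 ∧ a • x ∈ H}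

/-- `X` is a decomposition set with respect to the single prime `p`. -/
def IsDecompWrt {M : Type u} [AddCommGroup M] [Module R M] (p : R) (X : Set M) : Prop :=
  (LinearIndependent R (fun x : X => (x : M))) ∧
  (∀ x ∈ X, ∀ a : R, a ≠ 0 → a • x ≠ 0) ∧
  (∀ s : Finset M, ↑s ⊆ X → ∀ c : M → R,
    pheight p (∑ x ∈ s, c x • x) = s.inf fun x => pheight p (c x • x))

/-- `X` is a decomposition set (with respect to every prime of `R`). -/
def IsDecompositionSet (R : Type*) [CommRing R] {M : Type u} [AddCommGroup M] [Module R M]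
    (X : Set M) : Prop :=
  ∀ p : R, Prime p → IsDecompWrt p X

/-- partial decomposition basis, heights taken w.r.t. a fixed prime `p`. -/
def IsPDBWrt {M : Type u} [AddCommGroup M] [Module R M] (p : R) (C : Set (Set M)) : Prop :=
  C.Nonempty ∧ (∀ X ∈ C, X.Finite) ∧ (∀ X ∈ C, IsDecompWrt p X) ∧
  ∀ X ∈ C, ∀ x : M, ∃ Y ∈ C, X ⊆ Y ∧ x ∈ hull (Submodule.span R Y)

/-- partial decomposition basis (heights w.r.t. all primes of `R`). -/
def IsPDB (R : Type*) [CommRing R] {M : Type u} [AddCommGroup M] [Module R M] (C : Set (Set M)) : Prop :=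
  C.Nonempty ∧ (∀ X ∈ C, X.Finite) ∧ (∀ X ∈ C, IsDecompositionSet R X) ∧
  ∀ X ∈ C, ∀ x : M, ∃ Y ∈ C, X ⊆ Y ∧ x ∈ hull (Submodule.span R Y)

/-- A partial isomorphism system `I : G ≅_p H`. -/
def IsPartialIsoSystem {M N : Type*} [AddCommGroup M] [Module R M]
    [AddCommGroup N] [Module R N] (I : Set (M →ₗ.[R] N)) : Prop :=
  I.Nonempty ∧
  (∀ f ∈ I, Function.Injective f.toFun) ∧
  (∀ f ∈ I, ∀ a : M, ∃ g ∈ I, f ≤ g ∧ a ∈ g.domain) ∧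
  (∀ f ∈ I, ∀ b : N, ∃ g ∈ I, f ≤ g ∧ ∃ y : g.domain, g y = b)

/-- The Ulm sequence of `x`: `U(x) = (|pⁱ x|)ᵢ`. -/
def UlmSeqOf {M : Type u} [AddCommGroup M] [Module R M] (p : R) (x : M) :
    ℕ → WithTop Ordinal.{u} :=
  fun i => pheight p ((p ^ i) • x)

/-- `u` is an Ulm sequence. -/
def IsUlmSeq (u : ℕ → WithTop Ordinal.{u}) : Prop :=
  ∀ i, (u i = ⊤ → u (i + 1) = ⊤) ∧ (u i ≠ ⊤ → u i < u (i + 1))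

/-- Equivalence of Ulm sequences. -/
def UlmEquiv (u v : ℕ → WithTop Ordinal.{u}) : Prop :=
  ∃ m n : ℕ, ∀ i, u (i + n) = v (i + m)

/-- `X` contains at least `n` elements whose Ulm sequence is equivalent to `u`. -/
def HasAtLeast {M : Type u} [AddCommGroup M] [Module R M] (p : R)
    (u : ℕ → WithTop Ordinal.{u}) (n : ℕ) (X : Set M) : Prop :=
  ∃ s : Finset M, ↑s ⊆ X ∧ n ≤ s.card ∧ ∀ x ∈ s, UlmEquiv (UlmSeqOf p x) u

/-- `ŵ_C(e,G)` where `e` is the class of the Ulm sequence `u`. -/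
def wHat {M : Type u} [AddCommGroup M] [Module R M] (p : R) (C : Set (Set M))
    (u : ℕ → WithTop Ordinal.{u}) : ℕ∞ :=
  sSup {N : ℕ∞ | ∃ n : ℕ, N = (n : ℕ∞) ∧ ∃ X ∈ C, HasAtLeast p u n X}

/-- `x` is proper with respect to `S`. -/
def IsProper {M : Type u} [AddCommGroup M] [Module R M] (p : R) (S : Submodule R M)
    (x : M) : Prop :=
  ∀ s ∈ S, pheight p (x + s) ≤ pheight p x

/-- `H` is a nice submodule. -/
def IsNice {M : Type u} [AddCommGroup M] [Module R M] (p : R) (H : Submodule R M) : Prop :=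
  ∀ x : M, ∃ h ∈ H, ∀ h' ∈ H, pheight p (x + h') ≤ pheight p (x + h)

/-- The Ulm invariant `u_p(σ, M)`: the dimension of `(p^σ M)[p]/(p^{σ+1} M)[p]`
over the residue field `R/(p)`. -/
def uCard (p : R) (M : Type u) [AddCommGroup M] [Module R M] (σ : Ordinal.{u}) :
    Cardinal :=
  let V : Submodule R M := ppow p σ ⊓ Submodule.torsionBy R M p
  let W : Submodule R V := (ppow p (σ + 1) ⊓ Submodule.torsionBy R M p).comap V.subtype
  Module.rank (R ⧸ Ideal.span {p})
    ((V ⧸ W) ⧸ (Ideal.span {p} • (⊤ : Submodule R (V ⧸ W))))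

/-- `û_p(σ, M) = min (u_p(σ, M), ω)`. -/
def uHat (p : R) (M : Type u) [AddCommGroup M] [Module R M] (σ : Ordinal.{u}) : Cardinal :=
  min (uCard p M σ) Cardinal.aleph0

/-- `û_p(∞, M) = min (dim (p^∞ M)[p], ω)`. -/
def uHatInf (p : R) (M : Type u) [AddCommGroup M] [Module R M] : Cardinal :=
  let V : Submodule R M := (⨅ α : Ordinal.{u}, ppow p α) ⊓ Submodule.torsionBy R M p
  min (Module.rank (R ⧸ Ideal.span {p})
    (V ⧸ (Ideal.span {p} • (⊤ : Submodule R V)))) Cardinal.aleph0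

end UlmW

open UlmW

/-- The ideal `(p) ⊆ ℤ` is prime. -/
instance zpSpanPrime (p : ℤ) [hp : Fact (Prime p)] : (Ideal.span {p} : Ideal ℤ).IsPrime :=
  (Ideal.span_singleton_prime hp.out.ne_zero).mpr hp.out

/-- `ℤ_(p)`, the integers localized at the prime `p`. -/
abbrev Zp (p : ℤ) [Fact (Prime p)] : Type :=
  Localization.AtPrime (Ideal.span {p} : Ideal ℤ)


universe u

open UlmW

/-!
Let `ϖ` be a uniformizer of `ℤ_(p)`. Given `n` elements of some `X ∈ C` with Ulm sequences in
`e`, choose `Y ∈ C'` with these elements in `⟨Y⟩⁰`, and `B ∈ C` with `X ⊆ B` and `Y ⊆ ⟨B⟩⁰`; it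
suffices to find `n` elements of `Y` with Ulm sequences in `e`.

If `e` is eventually `∞`, suitable `ϖᵏ`-multiples of the given elements are independent and lie
in the span of the elements of `Y` of eventually infinite height, so ranks compare.

Otherwise `e` is strictly increasing, and in a decomposition set the Ulm sequence of a term
`a • b` with `U(b) ∈ e` determines the valuation of `a`. Suppose `Y` had fewer elements `b` with
`U(b) ∈ e` than there are given `x`. The normalised `Y`-coordinates of the `x` at those `b` are
then dependent modulo `ϖ`; lifting a dependence gives a combination `y` of the `x`, with a unit
coefficient at some `x₀`, whose `Y`-coordinates at every such `b` are divisible by one more power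
of `ϖ` than heights force. The coordinates at the other `b` gain that extra power as well, because
their Ulm sequences are not in `e`. Expanding in `B`, the coordinate of `y` at `x₀` would then be
divisible by a higher power of `ϖ` than it is.
-/

open Filter IsLocalRing

section LinearAlgebra

variable {R : Type*} [CommRing R] {M : Type*} [AddCommGroup M] [Module R M]

theorem sum_smul_eq_sum_sum_mul_smul {ι : Type*} {S : Finset ι} {T : Finset M} {v : ι → M}
    {F : ι → M → R} (hF : ∀ i ∈ S, ∑ d ∈ T, F i d • d = v i) (c : ι → R) :
    ∑ i ∈ S, c i • v i = ∑ d ∈ T, (∑ i ∈ S, c i * F i d) • d := by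
  simp_rw [Finset.sum_smul, mul_smul]
  rw [Finset.sum_comm]
  exact Finset.sum_congr rfl fun i hi => by rw [← hF i hi, Finset.smul_sum]

theorem LinearIndepOn.coeff_eq_of_sum_smul_eq {B S : Finset M}
    (hB : LinearIndepOn R id (B : Set M)) (hSB : S ⊆ B) {f g : M → R}
    (h : ∑ x ∈ S, f x • x = ∑ d ∈ B, g d • d) {x : M} (hx : x ∈ S) :
    f x = g x := by
  classical
  have hS : ∑ x ∈ S, f x • x = ∑ d ∈ B, (if d ∈ S then f d else 0) • d := by
    rw [← Finset.sum_subset hSB fun d _ hd => by simp [hd]]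
    exact Finset.sum_congr rfl fun d hd => by simp [hd]
  have := linearIndepOn_finset_iff.mp hB (fun d => (if d ∈ S then f d else 0) - g d)
    (by simp only [id_eq, sub_smul, Finset.sum_sub_distrib, ← hS, h, sub_self]) x (hSB hx)
  simpa [hx, sub_eq_zero] using this

theorem LinearIndependent.smul_of_ne_zero [NoZeroDivisors R] {ι : Type*} {v : ι → M}
    (hv : LinearIndependent R v) {a : R} (ha : a ≠ 0) :
    LinearIndependent R fun i => a • v i := by
  rw [linearIndependent_iff'] at hv ⊢
  intro t g hg i hi
  have := hv t (fun j => g j * a) (by simpa only [mul_smul] using hg) i hi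
  exact (mul_eq_zero.mp this).resolve_right ha

theorem exists_isUnit_and_forall_sum_mul_mem_maximalIdeal [IsLocalRing R] {ι κ : Type*}
    (s : Finset ι) (E : Finset κ) (hcard : E.card < s.card) (A : κ → ι → R) :
    ∃ c : ι → R, (∃ i ∈ s, IsUnit (c i)) ∧
      ∀ b ∈ E, ∑ i ∈ s, A b i * c i ∈ maximalIdeal R := by
  classical
  let Ā : Matrix E s (ResidueField R) := fun b i => residue R (A b i)
  have hker : LinearMap.ker Ā.mulVecLin ≠ ⊥ :=
    LinearMap.ker_ne_bot_of_finrank_lt (by simpa using hcard)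
  obtain ⟨g, hg, hg0⟩ := Submodule.exists_mem_ne_zero_of_ne_bot hker
  obtain ⟨i₀, hi₀⟩ := Function.ne_iff.mp hg0
  let lift := Function.surjInv (residue_surjective (R := R))
  refine ⟨fun i => if h : i ∈ s then lift (g ⟨i, h⟩) else 0, ⟨i₀, i₀.2, ?_⟩,
    fun b hb => ?_⟩
  · simpa [← residue_ne_zero_iff_isUnit, lift, Function.surjInv_eq] using hi₀
  · rw [← residue_eq_zero_iff, map_sum, ← Finset.sum_coe_sort]
    have := congrFun (LinearMap.mem_ker.mp hg) ⟨b, hb⟩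
    rw [Matrix.mulVecLin_apply] at this
    simpa [Ā, Matrix.mulVec, dotProduct, Function.surjInv_eq, lift] using this

theorem exists_isUnit_and_forall_pow_succ_dvd_sum [IsLocalRing R] {ϖ : R}
    (hϖ : maximalIdeal R = Ideal.span {ϖ}) {ι κ : Type*} (s : Finset ι) (E : Finset κ)
    (hcard : E.card < s.card) (A : κ → ι → R) (d : κ → ℕ)
    (hA : ∀ b ∈ E, ∀ i ∈ s, ϖ ^ d b ∣ A b i) :
    ∃ c : ι → R, (∃ i ∈ s, IsUnit (c i)) ∧
      ∀ b ∈ E, ϖ ^ (d b + 1) ∣ ∑ i ∈ s, A b i * c i := by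
  choose! A' hA' using hA
  obtain ⟨c, hc, hsum⟩ := exists_isUnit_and_forall_sum_mul_mem_maximalIdeal s E hcard A'
  refine ⟨c, hc, fun b hb => ?_⟩
  obtain ⟨r, hr⟩ := Ideal.mem_span_singleton'.mp (hϖ ▸ hsum b hb)
  refine ⟨r, ?_⟩
  rw [Finset.sum_congr rfl fun i hi => by rw [hA' b hb i hi, mul_assoc], ← Finset.mul_sum, ← hr,
    pow_succ, mul_assoc, mul_comm r]

end LinearAlgebra

namespace UlmW

section CommRing

variable {R : Type*} [CommRing R] {M : Type u} [AddCommGroup M] [Module R M] {p : R}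

theorem ppow_zero : (ppow p 0 : Submodule R M) = ⊤ :=
  Ordinal.limitRecOn_zero ..

theorem ppow_add_one (α : Ordinal.{u}) :
    (ppow p (α + 1) : Submodule R M) = (ppow p α).map (LinearMap.lsmul R M p) :=
  Ordinal.limitRecOn_add_one ..

theorem ppow_of_isSuccLimit {α : Ordinal.{u}} (hα : Order.IsSuccLimit α) :
    (ppow p α : Submodule R M) = ⨅ γ : Set.Iio α, ppow p γ.1 :=
  Ordinal.limitRecOn_limit _ _ _ _ hα

theorem ppow_add_one_le (α : Ordinal.{u}) :
    (ppow p (α + 1) : Submodule R M) ≤ ppow p α := by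
  rw [ppow_add_one]
  rintro _ ⟨y, hy, rfl⟩
  exact Submodule.smul_mem _ _ hy

theorem ppow_anti {α β : Ordinal.{u}} (hαβ : α ≤ β) :
    (ppow p β : Submodule R M) ≤ ppow p α := by
  induction β using Ordinal.limitRecOn generalizing α with
  | zero => rw [nonpos_iff_eq_zero.mp hαβ]
  | add_one γ IH =>
    rcases hαβ.eq_or_lt with rfl | hlt
    · exact le_rfl
    · exact (ppow_add_one_le γ).trans (IH (Order.lt_add_one_iff.mp hlt))
  | limit β hβ _ =>
    rcases hαβ.eq_or_lt with rfl | hlt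
    · exact le_rfl
    rw [ppow_of_isSuccLimit hβ]
    exact iInf_le (fun γ : Set.Iio β => ppow p γ.1) ⟨α, hlt⟩

theorem mem_ppow_of_not_exists_jump {x : M}
    (h : ¬ ∃ α : Ordinal.{u}, x ∈ ppow p α ∧ x ∉ ppow p (α + 1)) (α : Ordinal.{u}) :
    x ∈ ppow p α := by
  induction α using Ordinal.limitRecOn with
  | zero => simp [ppow_zero]
  | add_one γ IH =>
    by_contra hmem
    exact h ⟨γ, IH, hmem⟩
  | limit α hα IH =>
    rw [ppow_of_isSuccLimit hα]
    exact Submodule.mem_iInf _ |>.mpr fun γ => IH γ.1 γ.2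

theorem coe_le_pheight_iff {x : M} {α : Ordinal.{u}} :
    (α : WithTop Ordinal.{u}) ≤ pheight p x ↔ x ∈ ppow p α := by
  rw [pheight]
  split_ifs with h
  · obtain ⟨hmem, hnot⟩ := h.choose_spec
    refine ⟨fun hle => ppow_anti (WithTop.coe_le_coe.mp hle) hmem, fun hx => ?_⟩
    by_contra hgt
    exact hnot (ppow_anti (Order.succ_le_of_lt (WithTop.coe_lt_coe.mp (not_le.mp hgt))) hx)
  · simpa using mem_ppow_of_not_exists_jump h α

theorem le_pheight_sum {ι : Type*} {S : Finset ι} {g : ι → M} {t : WithTop Ordinal.{u}}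
    (h : ∀ i ∈ S, t ≤ pheight p (g i)) : t ≤ pheight p (∑ i ∈ S, g i) :=
  WithTop.forall_coe_le_iff_le.mp fun _ hα => coe_le_pheight_iff.mpr <|
    Submodule.sum_mem _ fun i hi => coe_le_pheight_iff.mp (hα.trans (h i hi))

theorem pheight_le_pheight_smul (a : R) (x : M) : pheight p x ≤ pheight p (a • x) :=
  WithTop.forall_coe_le_iff_le.mp fun _ hα =>
    coe_le_pheight_iff.mpr (Submodule.smul_mem _ a (coe_le_pheight_iff.mp hα))

theorem pheight_units_smul (w : Rˣ) (x : M) : pheight p ((w : R) • x) = pheight p x := by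
  refine le_antisymm ?_ (pheight_le_pheight_smul _ x)
  simpa [smul_smul] using pheight_le_pheight_smul (p := p) ((w⁻¹ : Rˣ) : R) ((w : R) • x)

theorem le_ulmSeqOf_sum {ι : Type*} {S : Finset ι} {g : ι → M} {t : WithTop Ordinal.{u}}
    {j : ℕ} (h : ∀ i ∈ S, t ≤ UlmSeqOf p (g i) j) :
    t ≤ UlmSeqOf p (∑ i ∈ S, g i) j := by
  simpa only [UlmSeqOf, Finset.smul_sum] using le_pheight_sum h

theorem ulmSeqOf_le_smul (a : R) (x : M) (j : ℕ) :
    UlmSeqOf p x j ≤ UlmSeqOf p (a • x) j := by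
  simpa only [UlmSeqOf, smul_comm (p ^ j) a x] using pheight_le_pheight_smul a (p ^ j • x)

theorem ulmSeqOf_pow_smul (k : ℕ) (x : M) (j : ℕ) :
    UlmSeqOf p (p ^ k • x) j = UlmSeqOf p x (j + k) := by
  simp only [UlmSeqOf, smul_smul, ← pow_add]

theorem ulmSeqOf_units_mul_pow_smul (w : Rˣ) (k : ℕ) (x : M) (j : ℕ) :
    UlmSeqOf p (((w : R) * p ^ k) • x) j = UlmSeqOf p x (j + k) := by
  rw [mul_smul, ← ulmSeqOf_pow_smul, UlmSeqOf, UlmSeqOf, smul_comm (p ^ j) (w : R),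
    pheight_units_smul]

theorem ulmSeqOf_monotone (x : M) : Monotone (UlmSeqOf p x) :=
  monotone_nat_of_le_succ fun j => calc
    UlmSeqOf p x j ≤ UlmSeqOf p (p ^ 1 • x) j := ulmSeqOf_le_smul _ x j
    _ = UlmSeqOf p x (j + 1) := ulmSeqOf_pow_smul 1 x j

theorem IsDecompWrt.ulmSeqOf_le_coeff {B : Finset M} (hB : IsDecompWrt p (B : Set M))
    {f : M → R} {z : M} (hz : ∑ d ∈ B, f d • d = z) {d : M} (hd : d ∈ B) (j : ℕ) :
    UlmSeqOf p z j ≤ UlmSeqOf p (f d • d) j := by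
  have hsum := hB.2.2 B (Set.Subset.refl _) fun d => p ^ j * f d
  calc UlmSeqOf p z j = pheight p (∑ d ∈ B, (p ^ j * f d) • d) := by
        simp only [UlmSeqOf, ← hz, Finset.smul_sum, smul_smul]
    _ ≤ pheight p ((p ^ j * f d) • d) := hsum ▸ Finset.inf_le hd
    _ = UlmSeqOf p (f d • d) j := by rw [UlmSeqOf, smul_smul]

theorem IsDecompWrt.ulmSeqOf_smul_le_coeff {B : Finset M} (hB : IsDecompWrt p (B : Set M))
    {f : M → R} {z : M} (hz : ∑ d ∈ B, f d • d = z) (a : R) {d : M} (hd : d ∈ B)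
    (j : ℕ) :
    UlmSeqOf p (a • z) j ≤ UlmSeqOf p ((a * f d) • d) j :=
  hB.ulmSeqOf_le_coeff (f := fun d => a * f d)
    (by simp only [← hz, Finset.smul_sum, mul_smul]) hd j

theorem eventually_le_ulmSeqOf_smul_of_pow_dvd {u : ℕ → WithTop Ordinal.{u}} {z : M}
    {m n : ℕ} (hz : ∀ i, UlmSeqOf p z (i + n) = u (i + m)) {β : R} {K : ℕ}
    (hβ : p ^ (n + K) ∣ p ^ m * β) :
    ∀ᶠ j in atTop, u (j + K) ≤ UlmSeqOf p (β • z) j := by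
  obtain ⟨r, hr⟩ := hβ
  refine eventually_atTop.mpr ⟨m, fun j hj => ?_⟩
  obtain ⟨i, rfl⟩ := Nat.exists_eq_add_of_le' hj
  calc u (i + m + K) = UlmSeqOf p (p ^ (n + K) • z) i := by
        rw [ulmSeqOf_pow_smul, show i + (n + K) = i + K + n by ring, hz, add_right_comm]
    _ ≤ UlmSeqOf p (r • p ^ (n + K) • z) i := ulmSeqOf_le_smul _ _ _
    _ = UlmSeqOf p (β • z) (i + m) := by
        rw [smul_smul, mul_comm, ← hr, mul_smul, ulmSeqOf_pow_smul]

theorem hull_mono {H H' : Submodule R M} (h : H ≤ H') : hull H ⊆ hull H' :=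
  fun _ ⟨a, ha, hax⟩ => ⟨a, ha, h hax⟩

theorem IsPDBWrt.exists_superset_forall_mem_hull {C : Set (Set M)} (hC : IsPDBWrt p C)
    {X : Set M} (hX : X ∈ C) (S : Finset M) :
    ∃ Y ∈ C, X ⊆ Y ∧ ∀ x ∈ S, x ∈ hull (Submodule.span R Y) := by
  classical
  induction S using Finset.induction with
  | empty => exact ⟨X, hX, subset_rfl, by simp⟩
  | insert a S _ ih =>
    obtain ⟨Y, hY, hXY, hcov⟩ := ih
    obtain ⟨Y', hY', hYY', ha⟩ := hC.2.2.2 Y hY a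
    refine ⟨Y', hY', hXY.trans hYY', fun x hx => ?_⟩
    rcases Finset.mem_insert.mp hx with rfl | hx
    · exact ha
    · exact hull_mono (Submodule.span_mono hYY') (hcov x hx)

theorem ulmEquiv_ulmSeqOf_iff_of_eq_top {e : ℕ → WithTop Ordinal.{u}} (he : IsUlmSeq e)
    {i : ℕ} (hi : e i = ⊤) (x : M) :
    UlmEquiv (UlmSeqOf p x) e ↔ ∃ N, UlmSeqOf p x N = ⊤ := by
  have hetop : ∀ j, e (j + i) = ⊤ := fun j => by
    induction j with
    | zero => simpa using hi
    | succ j ih => rw [add_right_comm]; exact (he _).1 ih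
  constructor
  · rintro ⟨m, n, h⟩
    exact ⟨i + n, by rw [h, add_comm, hetop]⟩
  · rintro ⟨N, hN⟩
    refine ⟨i, N, fun j => ?_⟩
    rw [hetop]
    exact top_unique (hN ▸ ulmSeqOf_monotone x le_add_self)

theorem exists_ulmSeqOf_add_eq_of_ulmEquiv {e : ℕ → WithTop Ordinal.{u}} {s : Finset M}
    (hs : ∀ x ∈ s, UlmEquiv (UlmSeqOf p x) e) :
    ∃ (K : ℕ) (N : M → ℕ), ∀ x ∈ s, ∀ i, UlmSeqOf p x (i + N x) = e (i + K) := by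
  choose! m n h using hs
  refine ⟨s.sup m, fun x => n x + (s.sup m - m x), fun x hx i => ?_⟩
  rw [show i + (n x + (s.sup m - m x)) = i + (s.sup m - m x) + n x by ring, h x hx, add_assoc,
    Nat.sub_add_cancel (Finset.le_sup hx)]

theorem UlmEquiv.trans {u v w : ℕ → WithTop Ordinal.{u}} (h₁ : UlmEquiv u v)
    (h₂ : UlmEquiv v w) : UlmEquiv u w := by
  obtain ⟨m, n, h₁⟩ := h₁
  obtain ⟨m', n', h₂⟩ := h₂
  exact ⟨m + m', n' + n, fun i => by
    rw [← add_assoc, h₁, add_right_comm, h₂, add_assoc]⟩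

theorem ulmEquiv_shift (u : ℕ → WithTop Ordinal.{u}) (M : ℕ) :
    UlmEquiv (fun i => u (i + M)) u :=
  ⟨M, 0, fun _ => rfl⟩

end CommRing

section DVR

variable {R : Type*} [CommRing R] [IsDomain R] [IsDiscreteValuationRing R]
  {M : Type u} [AddCommGroup M] [Module R M] {ϖ : R}

open IsDiscreteValuationRing

theorem exists_pow_smul_mem_span (hϖ : Irreducible ϖ) {Y : Set M} {s : Finset M}
    (hs : ∀ x ∈ s, x ∈ hull (Submodule.span R Y)) :
    ∃ k, ∀ x ∈ s, ϖ ^ k • x ∈ Submodule.span R Y := by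
  have h : ∀ x ∈ s, ∃ k, ϖ ^ k • x ∈ Submodule.span R Y := fun x hx => by
    obtain ⟨a, ha, hax⟩ := hs x hx
    obtain ⟨k, w, rfl⟩ := eq_unit_mul_pow_irreducible ha hϖ
    exact ⟨k, by simpa [smul_smul] using Submodule.smul_mem _ ((w⁻¹ : Rˣ) : R) hax⟩
  choose! k hk using h
  refine ⟨s.sup k, fun x hx => ?_⟩
  rw [← Nat.sub_add_cancel (Finset.le_sup hx), pow_add, mul_smul]
  exact Submodule.smul_mem _ _ (hk x hx)

theorem UlmEquiv.of_ulmSeqOf_smul (hϖ : Irreducible ϖ) {z : M} {a : R} (ha : a ≠ 0)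
    {v : ℕ → WithTop Ordinal.{u}} (h : UlmEquiv (UlmSeqOf ϖ (a • z)) v) :
    UlmEquiv (UlmSeqOf ϖ z) v := by
  obtain ⟨k, w, rfl⟩ := eq_unit_mul_pow_irreducible ha hϖ
  obtain ⟨m, n, h⟩ := h
  exact ⟨m, n + k, fun i => by rw [← add_assoc, ← ulmSeqOf_units_mul_pow_smul, h]⟩

variable {u : ℕ → WithTop Ordinal.{u}}

theorem pow_dvd_pow_mul_of_eventually_le (hϖ : Irreducible ϖ) (hu : StrictMono u) {z : M}
    {m n : ℕ} (hz : ∀ i, UlmSeqOf ϖ z (i + n) = u (i + m)) {a : R} {A : ℕ}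
    (h : ∀ᶠ j in atTop, u (j + A) ≤ UlmSeqOf ϖ (a • z) j) :
    ϖ ^ (n + A) ∣ ϖ ^ m * a := by
  rcases eq_or_ne a 0 with rfl | ha
  · simp
  obtain ⟨v, w, rfl⟩ := eq_unit_mul_pow_irreducible ha hϖ
  obtain ⟨J, hJ⟩ := eventually_atTop.mp h
  have hle := hJ (J + n) le_self_add
  rw [ulmSeqOf_units_mul_pow_smul, show J + n + v = J + v + n by ring, hz, hu.le_iff_le] at hle
  exact (pow_dvd_pow ϖ (by omega : n + A ≤ m + v)).trans ⟨w, by ring⟩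

theorem pow_succ_dvd_or_ulmEquiv (hϖ : Irreducible ϖ) (hu : StrictMono u) {z w : M} {n : ℕ}
    (hz : ∀ i, UlmSeqOf ϖ z (i + n) = u i) {a : R}
    (hwz : ∀ j, UlmSeqOf ϖ w j ≤ UlmSeqOf ϖ (a • z) j) {L : ℕ}
    (hw : ∀ᶠ j in atTop, u (j + L) ≤ UlmSeqOf ϖ w j) :
    ϖ ^ (n + L + 1) ∣ a ∨ UlmEquiv (UlmSeqOf ϖ w) u := by
  rcases eq_or_ne a 0 with rfl | ha
  · simp
  obtain ⟨v, w', rfl⟩ := eq_unit_mul_pow_irreducible ha hϖ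
  obtain ⟨J, hJ⟩ := eventually_atTop.mp hw
  have hsandwich : ∀ j ≥ J,
      u (j + n + L) ≤ UlmSeqOf ϖ w (j + n) ∧ UlmSeqOf ϖ w (j + n) ≤ u (j + v) :=
    fun j hj => ⟨hJ (j + n) (by omega), (hwz (j + n)).trans_eq <| by
      rw [ulmSeqOf_units_mul_pow_smul, show j + n + v = j + v + n by ring, hz]⟩
  have hle : n + L ≤ v := by
    have := (hsandwich J le_rfl).1.trans (hsandwich J le_rfl).2
    rw [hu.le_iff_le] at this
    omega
  rcases hle.lt_or_eq with hlt | rfl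
  · exact .inl ((pow_dvd_pow ϖ hlt).trans (dvd_mul_left _ _))
  · refine .inr ⟨J + n + L, J + n, fun i => ?_⟩
    have := hsandwich (i + J) (by omega)
    simp only [← add_assoc] at this ⊢
    exact le_antisymm this.2 this.1

open scoped Classical in
theorem card_le_card_filter_ulmSeqOf_eq_top (hϖ : Irreducible ϖ) {Y s : Finset M}
    (hY : IsDecompWrt ϖ (Y : Set M)) (hs : LinearIndepOn R id (s : Set M))
    (hsY : ∀ x ∈ s, x ∈ hull (Submodule.span R (Y : Set M)))
    (htop : ∀ x ∈ s, ∃ N, UlmSeqOf ϖ x N = ⊤) :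
    s.card ≤ (Y.filter fun b => ∃ N, UlmSeqOf ϖ b N = ⊤).card := by
  set E := Y.filter fun b => ∃ N, UlmSeqOf ϖ b N = ⊤
  obtain ⟨k, hk⟩ := exists_pow_smul_mem_span hϖ hsY
  have hspan : ∀ x ∈ s, ϖ ^ k • x ∈ Submodule.span R (E : Set M) := by
    intro x hx
    obtain ⟨f, -, hf⟩ := Submodule.mem_span_finset.mp (hk x hx)
    obtain ⟨N, hN⟩ := htop x hx
    rw [← hf, ← Finset.sum_filter_of_ne (p := fun b => ∃ N, UlmSeqOf ϖ b N = ⊤)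
      fun b hb hfb => ?_]
    · exact Submodule.sum_mem _ fun b hb => Submodule.smul_mem _ _ (Submodule.subset_span hb)
    obtain ⟨v, w, hw⟩ := eq_unit_mul_pow_irreducible (left_ne_zero_of_smul hfb) hϖ
    refine ⟨N + v, top_unique ?_⟩
    calc ⊤ = UlmSeqOf ϖ x (N + k) := (top_unique (hN ▸ ulmSeqOf_monotone x le_self_add)).symm
      _ = UlmSeqOf ϖ (ϖ ^ k • x) N := (ulmSeqOf_pow_smul k x N).symm
      _ ≤ UlmSeqOf ϖ (f b • b) N := hY.ulmSeqOf_le_coeff hf hb N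
      _ = UlmSeqOf ϖ b (N + v) := by rw [hw, ulmSeqOf_units_mul_pow_smul]
  have hli : LinearIndependent R fun x : s => ϖ ^ k • (x : M) :=
    LinearIndependent.smul_of_ne_zero hs (pow_ne_zero k hϖ.ne_zero)
  simpa using linearIndependent_le_span_aux' _ hli (E : Set M)
    (Set.range_subset_iff.mpr fun x => hspan x x.2)

theorem pow_dvd_pow_mul_coeff (hϖ : Irreducible ϖ) (hu : StrictMono u) {Y : Finset M}
    (hY : IsDecompWrt ϖ (Y : Set M)) {x b : M} {f : M → R} {k N m n : ℕ}
    (hf : ∑ d ∈ Y, f d • d = ϖ ^ k • x) (hx : ∀ i, UlmSeqOf ϖ x (i + N) = u i) (hb : b ∈ Y)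
    (hbu : ∀ i, UlmSeqOf ϖ b (i + n) = u (i + m)) : ϖ ^ (n + k) ∣ ϖ ^ m * (ϖ ^ N * f b) :=
  pow_dvd_pow_mul_of_eventually_le hϖ hu hbu <| .of_forall fun j => calc
    u (j + k) = UlmSeqOf ϖ (ϖ ^ N • ϖ ^ k • x) j := by
      rw [ulmSeqOf_pow_smul, ulmSeqOf_pow_smul, add_right_comm, hx]
    _ ≤ UlmSeqOf ϖ ((ϖ ^ N * f b) • b) j := hY.ulmSeqOf_smul_le_coeff hf _ hb j

/-- When `U(b)` is in the class of `u`, the extra factor `ϖ` is supplied by `hE`; otherwise the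
bounds `hβ` and `hx₀b` cannot both be sharp, as that would put `U(b)` in the class. -/
theorem pow_succ_dvd_coeff (hϖ : Irreducible ϖ) (hu : StrictMono u) {x₀ b : M} {N₀ k q : ℕ}
    (hx₀ : ∀ i, UlmSeqOf ϖ x₀ (i + N₀) = u i) {β F₀ : R}
    (hx₀b : ∀ j, UlmSeqOf ϖ (β • ϖ ^ q • b) j ≤ UlmSeqOf ϖ ((β * F₀) • x₀) j)
    (hβ : ∀ j, u (j + k) ≤ UlmSeqOf ϖ (β • b) j)
    (hE : UlmEquiv (UlmSeqOf ϖ b) u →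
      ∃ m n, (∀ i, UlmSeqOf ϖ b (i + n) = u (i + m)) ∧ ϖ ^ (n + (k + 1)) ∣ ϖ ^ m * β) :
    ϖ ^ (N₀ + k + q + 1) ∣ β * F₀ := by
  have hshift (j : ℕ) : UlmSeqOf ϖ (β • b) (j + q) = UlmSeqOf ϖ (β • ϖ ^ q • b) j := by
    rw [smul_comm, ulmSeqOf_pow_smul]
  by_cases hb : UlmEquiv (UlmSeqOf ϖ b) u
  · obtain ⟨m, n, hmn, hdvd⟩ := hE hb
    have hev := (tendsto_add_atTop_nat q).eventually
      (eventually_le_ulmSeqOf_smul_of_pow_dvd hmn hdvd)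
    have := pow_dvd_pow_mul_of_eventually_le hϖ hu (m := 0) (A := k + 1 + q)
      (fun i => by simpa using hx₀ i) <| hev.mono fun j hj => by
        rw [show j + (k + 1 + q) = j + q + (k + 1) by ring]
        exact (hj.trans_eq (hshift j)).trans (hx₀b j)
    simpa [add_assoc, add_comm 1 q] using this
  · rcases eq_or_ne β 0 with rfl | hβ0
    · simp
    refine (pow_succ_dvd_or_ulmEquiv hϖ hu hx₀ hx₀b (L := k + q) (.of_forall fun j => ?_)).elim
      (fun h => by simpa [add_assoc] using h) fun hequiv => absurd ?_ hb
    · rw [show j + (k + q) = j + q + k by ring, ← hshift]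
      exact hβ (j + q)
    · rw [smul_smul] at hequiv
      exact hequiv.of_ulmSeqOf_smul hϖ (mul_ne_zero hβ0 (pow_ne_zero q hϖ.ne_zero))

open scoped Classical in
theorem card_le_card_filter_ulmEquiv (hϖ : Irreducible ϖ) (hu : StrictMono u)
    {B Y s : Finset M} (hB : IsDecompWrt ϖ (B : Set M)) (hY : IsDecompWrt ϖ (Y : Set M))
    (hsB : s ⊆ B) (hsY : ∀ x ∈ s, x ∈ hull (Submodule.span R (Y : Set M)))
    (hYB : ∀ b ∈ Y, b ∈ hull (Submodule.span R (B : Set M))) {N : M → ℕ}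
    (hs : ∀ x ∈ s, ∀ i, UlmSeqOf ϖ x (i + N x) = u i) :
    s.card ≤ (Y.filter fun b => UlmEquiv (UlmSeqOf ϖ b) u).card := by
  set E := Y.filter fun b => UlmEquiv (UlmSeqOf ϖ b) u
  by_contra! hcard
  obtain ⟨k, hk⟩ := exists_pow_smul_mem_span hϖ hsY
  choose! f hf using fun x hx =>
    (Submodule.mem_span_finset.mp (hk x hx)).imp fun _ => And.right
  obtain ⟨q, hq⟩ := exists_pow_smul_mem_span hϖ hYB
  choose! F hF using fun b hb =>
    (Submodule.mem_span_finset.mp (hq b hb)).imp fun _ => And.right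
  choose! m n hmn using fun b (hb : b ∈ E) => (Finset.mem_filter.mp hb).2
  have hA : ∀ b ∈ E, ∀ x ∈ s, ϖ ^ (n b + k) ∣ ϖ ^ m b * (ϖ ^ N x * f x b) :=
    fun b hb x hx => pow_dvd_pow_mul_coeff hϖ hu hY (hf x hx) (hs x hx)
      (Finset.mem_filter.mp hb).1 (hmn b hb)
  obtain ⟨c, ⟨x₀, hx₀, hc₀⟩, hc⟩ := exists_isUnit_and_forall_pow_succ_dvd_sum
    ((irreducible_iff_uniformizer ϖ).mp hϖ) s E hcard _ _ hA
  set β : M → R := fun b => ∑ x ∈ s, c x * ϖ ^ N x * f x b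
  have hyY : ∑ x ∈ s, (c x * ϖ ^ N x) • ϖ ^ k • x = ∑ b ∈ Y, β b • b :=
    sum_smul_eq_sum_sum_mul_smul (fun x hx => hf x hx) _
  have hβ : ∀ b ∈ Y, ∀ j, u (j + k) ≤ UlmSeqOf ϖ (β b • b) j := fun b hb j =>
    (le_ulmSeqOf_sum fun x hx => calc
      u (j + k) = UlmSeqOf ϖ (ϖ ^ N x • ϖ ^ k • x) j := by
        rw [ulmSeqOf_pow_smul, ulmSeqOf_pow_smul, add_right_comm, hs x hx]
      _ ≤ UlmSeqOf ϖ ((c x * ϖ ^ N x) • ϖ ^ k • x) j := by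
        rw [mul_smul]
        exact ulmSeqOf_le_smul _ _ _).trans (hY.ulmSeqOf_le_coeff hyY.symm hb j)
  have hcoeff : c x₀ * ϖ ^ (N x₀ + k + q) = ∑ b ∈ Y, β b * F b x₀ := by
    refine LinearIndepOn.coeff_eq_of_sum_smul_eq hB.1 hsB ?_ hx₀
      (f := fun x => c x * ϖ ^ (N x + k + q)) (g := fun d => ∑ b ∈ Y, β b * F b d)
    rw [← sum_smul_eq_sum_sum_mul_smul hF β]
    simp_rw [smul_comm _ (ϖ ^ q), ← Finset.smul_sum, ← hyY, Finset.smul_sum, smul_smul]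
    exact Finset.sum_congr rfl fun x _ => by ring_nf
  have hdvd : ∀ b ∈ Y, ϖ ^ (N x₀ + k + q + 1) ∣ β b * F b x₀ := fun b hb =>
    pow_succ_dvd_coeff hϖ hu (hs x₀ hx₀)
      (hB.ulmSeqOf_smul_le_coeff (hF b hb) (β b) (hsB hx₀))
      (hβ b hb) fun hbu => ⟨m b, n b, hmn b (Finset.mem_filter.mpr ⟨hb, hbu⟩), by
        convert hc b (Finset.mem_filter.mpr ⟨hb, hbu⟩) using 1
        · ring
        · simp only [β, Finset.mul_sum]
          exact Finset.sum_congr rfl fun x _ => by ring⟩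
  have := Finset.dvd_sum hdvd
  rw [← hcoeff, hc₀.dvd_mul_left, pow_dvd_pow_iff hϖ.ne_zero hϖ.not_isUnit] at this
  omega

theorem IsPDBWrt.exists_hasAtLeast (hϖ : Irreducible ϖ) {C C' : Set (Set M)}
    (hC : IsPDBWrt ϖ C) (hC' : IsPDBWrt ϖ C') {e : ℕ → WithTop Ordinal.{u}} (he : IsUlmSeq e)
    {n : ℕ} {X : Set M} (hX : X ∈ C) (h : HasAtLeast ϖ e n X) :
    ∃ Y ∈ C', HasAtLeast ϖ e n Y := by
  classical
  obtain ⟨s, hsX, hns, hse⟩ := h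
  obtain ⟨Y, hYC', -, hsY⟩ := hC'.exists_superset_forall_mem_hull hC'.1.some_mem s
  lift Y to Finset M using hC'.2.1 Y hYC'
  obtain ⟨B, hBC, hXB, hYB⟩ := hC.exists_superset_forall_mem_hull hX Y
  lift B to Finset M using hC.2.1 B hBC
  have hsB : s ⊆ B := fun x hx => hXB (hsX hx)
  have hB := hC.2.2.1 _ hBC
  have hY := hC'.2.2.1 _ hYC'
  refine ⟨Y, hYC', Y.filter fun b => UlmEquiv (UlmSeqOf ϖ b) e,
    Finset.coe_subset.mpr (Finset.filter_subset _ _), hns.trans ?_, by simp⟩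
  by_cases htop : ∃ i, e i = ⊤
  · obtain ⟨i, hi⟩ := htop
    simp only [ulmEquiv_ulmSeqOf_iff_of_eq_top he hi] at hse ⊢
    exact card_le_card_filter_ulmSeqOf_eq_top hϖ hY
      (LinearIndepOn.mono hB.1 (Finset.coe_subset.mpr hsB)) hsY hse
  · have hu : StrictMono e :=
      strictMono_nat_of_lt_succ fun i => (he i).2 fun hi => htop ⟨i, hi⟩
    obtain ⟨K, N, hN⟩ := exists_ulmSeqOf_add_eq_of_ulmEquiv hse
    have hK : StrictMono fun i => e (i + K) := fun a b hab => hu (by omega)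
    exact (card_le_card_filter_ulmEquiv hϖ hK hB hY hsB hsY hYB hN).trans <| Finset.card_le_card <|
      Finset.monotone_filter_right Y fun b _ hb => hb.trans (ulmEquiv_shift e K)

end DVR

end UlmW

section Zp

variable (p : ℤ) [Fact (Prime p)]

instance : IsDomain (Zp p) :=
  IsLocalization.isDomain_of_local_atPrime (zpSpanPrime p)

instance : IsDiscreteValuationRing (Zp p) :=
  IsLocalization.AtPrime.isDiscreteValuationRing_of_dedekind_domain ℤ
    (by rw [Ne, Ideal.span_singleton_eq_bot]; exact (Fact.out : Prime p).ne_zero) _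

theorem irreducible_intCast_zp : Irreducible (p : Zp p) := by
  rw [IsDiscreteValuationRing.irreducible_iff_uniformizer,
    ← Localization.AtPrime.map_eq_maximalIdeal,
    Ideal.map_span, Set.image_singleton, eq_intCast]

end Zp

theorem statement_4 (p : ℤ) [Fact (Prime p)] {G : Type u} [AddCommGroup G]
    [Module (Zp p) G]
    (C C' : Set (Set G)) (hC : IsPDBWrt (p : Zp p) C) (hC' : IsPDBWrt (p : Zp p) C')
    (e : ℕ → WithTop Ordinal.{u}) (he : IsUlmSeq e) :
    wHat (p : Zp p) C e = wHat (p : Zp p) C' e := by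
  have hp := irreducible_intCast_zp p
  unfold wHat
  congr 1
  ext N
  constructor <;> rintro ⟨n, rfl, X, hX, h⟩
  · exact ⟨n, rfl, hC.exists_hasAtLeast hp hC' he hX h⟩
  · exact ⟨n, rfl, hC'.exists_hasAtLeast hp hC he hX h⟩
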